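/- arXiv:1806.00106 — 2 statements merged into one kernel-verified Lean document; each statement's English description precedes it below -/
import Mathlib

section
/- There exists a family {𝒜_α : α < 𝔠} of 𝔠 many Luzin almost disjoint families on ω such that for all α ≠ β, the Ψ-spaces Ψ(𝒜_α) and Ψ(𝒜_β) are not homeomorphic. -/
open Set Cardinal

/-- An almost disjoint family on ω. -/
def ADFamily (𝒜 : Set (Set ℕ)) : Prop :=
  𝒜.Infinite ∧ (∀ A ∈ 𝒜, A.Infinite) ∧
    ∀ A ∈ 𝒜, ∀ B ∈ 𝒜, A ≠ B → (A ∩ B).Finite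

/-- The Ψ-space topology on ℕ ⊕ 𝒜. -/
def psiTop (𝒜 : Set (Set ℕ)) : TopologicalSpace (ℕ ⊕ ↥𝒜) :=
  TopologicalSpace.generateFrom
    ({U | ∃ n : ℕ, U = {Sum.inl n}} ∪
     {U | ∃ (A : ↥𝒜) (F : Finset ℕ),
        U = insert (Sum.inr A) (Sum.inl '' ((A : Set ℕ) \ ↑F))})

/-- An AD family is Luzin if it can be enumerated as ⟨A_α : α < ω₁⟩ so that for
every α < ω₁ and every n ∈ ω, {β < α : A_α ∩ A_β ⊆ n} is finite. -/
def IsLuzinFamily (𝒜 : Set (Set ℕ)) : Prop :=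
  ∃ A : {α : Ordinal.{0} // α < (Cardinal.aleph 1).ord} → Set ℕ,
    Function.Injective A ∧ Set.range A = 𝒜 ∧
    ∀ α, ∀ n : ℕ, {β | β < α ∧ A α ∩ A β ⊆ Set.Iio n}.Finite

/-!
For an infinite `X ⊆ ℕ` we build, by recursion on `α < ω₁`, sets `A α` such that `A α` meets
every earlier `A β` in a finite set whose size lies in `X`, and only finitely many of them in at
most `n` points: `A α` diagonalises against an enumeration of the earlier sets, choosing its trace
on the `k`-th one after the part of that trace forced at earlier stages. This makes `{A α}` a
Luzin family.

A homeomorphism `Ψ(𝒜) ≃ₜ Ψ(ℬ)` maps `ω` onto `ω` and carries each `A ∈ 𝒜`, up to a finite error,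
onto a member of `ℬ`. By pigeonhole uncountably many `A α` have errors of the same size `c`, and
one of them has infinitely many such `A β` below it, hence one with `|A α ∩ A β|` large; then a
large element of `X` lies within `2c` of an element of `Y`. Choosing `X` among `𝔠` sets of powers
of two with pairwise finite intersections, no two of these Ψ-spaces are homeomorphic.
-/

open scoped Classical in
noncomputable def prefixCode (r : Set ℕ) (n : ℕ) : ℕ :=
  Encodable.encode ((Finset.range n).filter (· ∈ r), n)

lemma prefixCode_eq_prefixCode {r s : Set ℕ} {m n : ℕ} :
    prefixCode r m = prefixCode s n ↔ m = n ∧ ∀ i < m, (i ∈ r ↔ i ∈ s) := by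
  simp only [prefixCode, Encodable.encode_inj, Prod.mk.injEq, Finset.ext_iff, Finset.mem_filter,
    Finset.mem_range]
  constructor
  · rintro ⟨h, rfl⟩
    exact ⟨rfl, fun i hi => by simpa [hi] using h i⟩
  · rintro ⟨rfl, h⟩
    exact ⟨fun i => and_congr_right fun hi => h i hi, rfl⟩

lemma prefixCode_injective (r : Set ℕ) : Function.Injective (prefixCode r) :=
  fun _ _ h => (prefixCode_eq_prefixCode.1 h).1

lemma finite_range_prefixCode_inter {r s : Set ℕ} (hrs : r ≠ s) :
    (range (prefixCode r) ∩ range (prefixCode s)).Finite := by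
  obtain ⟨i, hi⟩ : ∃ i, ¬(i ∈ r ↔ i ∈ s) := by
    by_contra! h
    exact hrs (Set.ext h)
  refine ((finite_Iic i).image (prefixCode r)).subset ?_
  rintro _ ⟨⟨m, rfl⟩, n, hn⟩
  obtain ⟨rfl, hagree⟩ := prefixCode_eq_prefixCode.1 hn.symm
  exact ⟨m, mem_Iic.2 (not_lt.1 fun hin => hi (hagree i hin)), rfl⟩

def FarApart (X Y : Set ℕ) : Prop :=
  ∀ c, ∃ N, ∀ x ∈ X, N ≤ x → ∀ y ∈ Y, c < Nat.dist x y

lemma two_pow_le_two_mul_dist {k l : ℕ} (h : k ≠ l) : 2 ^ k ≤ 2 * Nat.dist (2 ^ k) (2 ^ l) := by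
  unfold Nat.dist
  rcases h.lt_or_gt with h | h
  all_goals
    have := Nat.pow_le_pow_right two_pos h.nat_succ_le
    rw [pow_succ] at this
    omega

lemma farApart_of_inter_finite {X Y : Set ℕ} (hX : X ⊆ range (2 ^ ·)) (hY : Y ⊆ range (2 ^ ·))
    (hXY : (X ∩ Y).Finite) : FarApart X Y := by
  intro c
  obtain ⟨M, hM⟩ := hXY.bddAbove
  refine ⟨max (M + 1) (2 * c + 1), fun x hx hNx y hy => ?_⟩
  obtain ⟨k, rfl⟩ := hX hx
  obtain ⟨l, rfl⟩ := hY hy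
  dsimp only at hNx ⊢
  have hkl : k ≠ l := by
    rintro rfl
    have : 2 ^ k ≤ M := hM ⟨hx, hy⟩
    omega
  have := two_pow_le_two_mul_dist hkl
  omega

def codeSet (r : Set ℕ) : Set ℕ := (2 ^ ·) '' range (prefixCode r)

lemma codeSet_infinite (r : Set ℕ) : (codeSet r).Infinite :=
  (infinite_range_of_injective (prefixCode_injective r)).image
    (Nat.pow_right_injective le_rfl).injOn

lemma farApart_codeSet {r s : Set ℕ} (hrs : r ≠ s) : FarApart (codeSet r) (codeSet s) := by
  refine farApart_of_inter_finite (image_subset_range _ _) (image_subset_range _ _) ?_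
  rw [codeSet, codeSet, ← image_inter (Nat.pow_right_injective le_rfl)]
  exact (finite_range_prefixCode_inter hrs).image _

def IsDiagonal (X : Set ℕ) (g : ℕ → Set ℕ) (A : Set ℕ) : Prop :=
  ∀ k, (A ∩ g k).Finite ∧ (A ∩ g k).ncard ∈ X ∧ k < (A ∩ g k).ncard

lemma IsDiagonal.infinite {X A : Set ℕ} {g : ℕ → Set ℕ} (h : IsDiagonal X g A) : A.Infinite := by
  intro hA
  have := (h A.ncard).2.2
  have := ncard_le_ncard (inter_subset_left (t := g A.ncard)) hA
  omega

lemma exists_finset_seq_eq_biUnion {α : Type*} [DecidableEq α] (D : ℕ → Finset α → Finset α) :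
    ∃ d : ℕ → Finset α, ∀ n, d n = D n ((Finset.range n).biUnion d) := by
  let acc : ℕ → Finset α := fun n => Nat.rec ∅ (fun k P => P ∪ D k P) n
  refine ⟨fun n => D n (acc n), fun n => congrArg (D n) ?_⟩
  induction n with
  | zero => rfl
  | succ n ih =>
    rw [Finset.range_add_one, Finset.biUnion_insert, Finset.union_comm, ← ih]

lemma exists_finset_subset_card_add_mem {X S : Set ℕ} (hX : X.Infinite) (hS : S.Infinite)
    (j k : ℕ) : ∃ D : Finset ℕ, ↑D ⊆ S ∧ j + D.card ∈ X ∧ k < j + D.card := by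
  obtain ⟨x, hx, hjx⟩ := hX.exists_gt (j + k)
  obtain ⟨D, hDS, hD⟩ := hS.exists_subset_card_eq (x - j)
  refine ⟨D, hDS, ?_, by omega⟩
  rwa [hD, Nat.add_sub_cancel' (by omega)]

open scoped Classical in
theorem exists_isDiagonal {X : Set ℕ} {g : ℕ → Set ℕ} (hX : X.Infinite)
    (hg : ∀ k, (g k).Infinite) (had : Pairwise fun m n => (g m ∩ g n).Finite) :
    ∃ A, IsDiagonal X g A := by
  have hfresh : ∀ k (P : Finset ℕ), {x | x ∈ g k ∧ (∀ m < k, x ∉ g m) ∧ x ∉ P}.Infinite := by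
    intro k P
    refine (((hg k).sdiff ((finite_Iio k).biUnion fun m hm => had (ne_of_gt hm))).sdiff
      P.finite_toSet).mono ?_
    rintro x ⟨⟨hxk, hxm⟩, hxP⟩
    simp only [mem_iUnion, mem_inter_iff, mem_Iio, not_exists, not_and] at hxm
    exact ⟨hxk, fun m hm hx => hxm m hm hxk hx, hxP⟩
  -- The pieces `P` added before stage `k` already meet `g k` in `P.filter (· ∈ g k)`; the new
  -- piece `D k P` tops this up to a size in `X`.
  choose D hDsub hDmem using fun k (P : Finset ℕ) =>
    exists_finset_subset_card_add_mem hX (hfresh k P) (P.filter (· ∈ g k)).card k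
  obtain ⟨d, hd⟩ := exists_finset_seq_eq_biUnion D
  have hdsub : ∀ n x, x ∈ d n → x ∈ g n ∧ (∀ m < n, x ∉ g m) ∧ x ∉ (Finset.range n).biUnion d :=
    fun n x hx => hDsub _ _ (by rw [← hd]; exact hx)
  refine ⟨⋃ n, ↑(d n), fun k => ?_⟩
  set P := (Finset.range k).biUnion d
  have htrace : (⋃ n, (d n : Set ℕ)) ∩ g k = ↑(P.filter (· ∈ g k) ∪ d k) := by
    ext x
    simp only [mem_inter_iff, mem_iUnion, Finset.mem_coe, Finset.coe_union, Finset.coe_filter,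
      mem_union, mem_ofPred_eq, P, Finset.mem_biUnion, Finset.mem_range]
    constructor
    · rintro ⟨⟨n, hn⟩, hxk⟩
      rcases lt_trichotomy n k with h | rfl | h
      · exact Or.inl ⟨⟨n, h, hn⟩, hxk⟩
      · exact Or.inr hn
      · exact absurd hxk ((hdsub n x hn).2.1 k h)
    · rintro (⟨⟨n, -, hn⟩, hxk⟩ | hx)
      · exact ⟨⟨n, hn⟩, hxk⟩
      · exact ⟨⟨k, hx⟩, (hdsub k x hx).1⟩
  have hdisj : Disjoint (P.filter (· ∈ g k)) (d k) :=
    Finset.disjoint_left.2 fun x hxP hxd => (hdsub k x hxd).2.2 (Finset.mem_filter.1 hxP).1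
  rw [htrace, ncard_coe_finset, Finset.card_union_of_disjoint hdisj, hd k]
  exact ⟨Finset.finite_toSet _, hDmem k P⟩

lemma nonempty_equiv_nat_sum (β : Type*) [Countable β] : Nonempty (ℕ ≃ ℕ ⊕ β) := by
  obtain ⟨_⟩ := nonempty_denumerable_iff (α := ℕ ⊕ β) |>.2 ⟨inferInstance, inferInstance⟩
  exact ⟨(Denumerable.eqv (ℕ ⊕ β)).symm⟩

abbrev CountableOrdinal : Type 1 := {α : Ordinal.{0} // α < (aleph 1).ord}

namespace CountableOrdinal

lemma countable_Iio (α : CountableOrdinal) : (Iio α).Countable := by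
  have : (Iio α.1).Countable := by
    rw [← le_aleph0_iff_set_countable, mk_Iio_ordinal, ← lift_aleph0.{1, 0}, lift_le,
      ← Order.lt_succ_iff, succ_aleph0, ← lt_ord]
    exact α.2
  exact this.preimage Subtype.val_injective

instance : Uncountable CountableOrdinal := by
  have : #CountableOrdinal = lift.{1} (aleph.{0} 1) := by
    rw [← card_ord (aleph.{0} 1), ← mk_Iio_ordinal]
    rfl
  rw [← aleph0_lt_mk_iff, this, ← lift_aleph0.{1, 0}, lift_lt]
  exact aleph0_lt_aleph_one

noncomputable def enumBelow (α : CountableOrdinal) : ℕ ≃ ℕ ⊕ Iio α :=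
  haveI := α.countable_Iio.to_subtype
  Classical.choice (nonempty_equiv_nat_sum _)

end CountableOrdinal

open CountableOrdinal

def column (n : ℕ) : Set ℕ := range (Nat.pair n)

lemma column_infinite (n : ℕ) : (column n).Infinite :=
  infinite_range_of_injective fun _ _ h => (Nat.pair_eq_pair.1 h).2

lemma column_inter_column {m n : ℕ} (h : m ≠ n) : column m ∩ column n = ∅ := by
  rw [← disjoint_iff_inter_eq_empty, disjoint_right]
  rintro _ ⟨b, rfl⟩ ⟨a, hab⟩
  exact h (Nat.pair_eq_pair.1 hab).1

def priorSets (A : CountableOrdinal → Set ℕ) (α : CountableOrdinal) : ℕ ⊕ Iio α → Set ℕ :=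
  Sum.elim column fun β => A β

-- Diagonalising against the columns as well keeps the sets to diagonalise against infinite in
-- number (so enumerable by `ℕ`) also for finite `α`.
noncomputable def luzinFamily (X : Set ℕ) : CountableOrdinal → Set ℕ :=
  wellFounded_lt.fix fun α A =>
    Classical.epsilon (IsDiagonal X (Sum.elim column (fun β : Iio α => A β β.2) ∘ enumBelow α))

lemma luzinFamily_eq (X : Set ℕ) (α : CountableOrdinal) :
    luzinFamily X α =
      Classical.epsilon (IsDiagonal X (priorSets (luzinFamily X) α ∘ enumBelow α)) :=
  wellFounded_lt.fix_eq _ α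

lemma isDiagonal_apply_symm {X A : Set ℕ} {ι : Type*} {f : ι → Set ℕ} {e : ℕ ≃ ι}
    (h : IsDiagonal X (f ∘ e) A) (i : ι) :
    (A ∩ f i).Finite ∧ (A ∩ f i).ncard ∈ X ∧ e.symm i < (A ∩ f i).ncard := by
  simpa using h (e.symm i)

lemma priorSets_infinite {A : CountableOrdinal → Set ℕ} {α : CountableOrdinal}
    (hA : ∀ β < α, (A β).Infinite) (i : ℕ ⊕ Iio α) : (priorSets A α i).Infinite := by
  rcases i with n | ⟨β, hβ⟩
  · exact column_infinite n
  · exact hA β hβ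

lemma priorSets_pairwise {A : CountableOrdinal → Set ℕ} {α : CountableOrdinal}
    (hA : ∀ β < α, ∀ i, (A β ∩ priorSets A β i).Finite) :
    Pairwise fun i j => (priorSets A α i ∩ priorSets A α j).Finite := by
  have hcol : ∀ β < α, ∀ n, (A β ∩ column n).Finite := fun β hβ n => hA β hβ (.inl n)
  have hprior : ∀ β < α, ∀ γ < β, (A β ∩ A γ).Finite := fun β hβ γ hγ => hA β hβ (.inr ⟨γ, hγ⟩)
  rintro (m | ⟨β, hβ⟩) (n | ⟨γ, hγ⟩) hij
  · simp [priorSets, column_inter_column fun h => hij (congrArg _ h)]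
  · simpa [priorSets, inter_comm] using hcol γ hγ m
  · simpa [priorSets] using hcol β hβ n
  · have hβγ : β ≠ γ := fun h => hij (by subst h; rfl)
    rcases hβγ.lt_or_gt with h | h
    · simpa [priorSets, inter_comm] using hprior γ hγ β h
    · simpa [priorSets] using hprior β hβ γ h

theorem isDiagonal_luzinFamily {X : Set ℕ} (hX : X.Infinite) (α : CountableOrdinal) :
    IsDiagonal X (priorSets (luzinFamily X) α ∘ enumBelow α) (luzinFamily X α) := by
  induction α using WellFoundedLT.induction with
  | _ α ih =>
  rw [luzinFamily_eq]
  refine Classical.epsilon_spec (exists_isDiagonal hX ?_ ?_)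
  · exact fun k => priorSets_infinite (fun β hβ => (ih β hβ).infinite) _
  · exact (priorSets_pairwise fun β hβ i => (isDiagonal_apply_symm (ih β hβ) i).1).comp_of_injective
      (enumBelow α).injective

structure IsLuzinWithSizesIn (X : Set ℕ) (A : CountableOrdinal → Set ℕ) : Prop where
  infinite : ∀ α, (A α).Infinite
  inter_finite : ∀ {α β}, β < α → (A α ∩ A β).Finite
  ncard_inter_mem : ∀ {α β}, β < α → (A α ∩ A β).ncard ∈ X
  finite_setOf_ncard_inter_le : ∀ α n, {β | β < α ∧ (A α ∩ A β).ncard ≤ n}.Finite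

theorem isLuzinWithSizesIn_luzinFamily {X : Set ℕ} (hX : X.Infinite) :
    IsLuzinWithSizesIn X (luzinFamily X) where
  infinite α := (isDiagonal_luzinFamily hX α).infinite
  inter_finite hβ := (isDiagonal_apply_symm (isDiagonal_luzinFamily hX _) (.inr ⟨_, hβ⟩)).1
  ncard_inter_mem hβ := (isDiagonal_apply_symm (isDiagonal_luzinFamily hX _) (.inr ⟨_, hβ⟩)).2.1
  finite_setOf_ncard_inter_le α n := by
    let f : ℕ → CountableOrdinal := fun k => Sum.elim (fun _ => α) Subtype.val (enumBelow α k)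
    refine ((finite_Iio n).image f).subset ?_
    rintro β ⟨hβ, hn⟩
    have := (isDiagonal_apply_symm (isDiagonal_luzinFamily hX α) (.inr ⟨β, hβ⟩)).2.2
    exact ⟨_, mem_Iio.2 (this.trans_le hn), by simp [f]⟩

namespace IsLuzinWithSizesIn

variable {X : Set ℕ} {A : CountableOrdinal → Set ℕ} (hA : IsLuzinWithSizesIn X A)
include hA

lemma inter_finite_of_ne {α β : CountableOrdinal} (h : α ≠ β) : (A α ∩ A β).Finite := by
  rcases h.lt_or_gt with h | h
  · exact inter_comm (A α) _ ▸ hA.inter_finite h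
  · exact hA.inter_finite h

lemma ncard_inter_mem_of_ne {α β : CountableOrdinal} (h : α ≠ β) : (A α ∩ A β).ncard ∈ X := by
  rcases h.lt_or_gt with h | h
  · exact inter_comm (A α) _ ▸ hA.ncard_inter_mem h
  · exact hA.ncard_inter_mem h

lemma injective : Function.Injective A := by
  intro α β h
  by_contra hne
  exact hA.infinite α (by simpa [h] using hA.inter_finite_of_ne hne)

lemma adFamily : ADFamily (range A) := by
  refine ⟨infinite_range_of_injective hA.injective, ?_, ?_⟩
  · rintro _ ⟨α, rfl⟩
    exact hA.infinite α
  · rintro _ ⟨α, rfl⟩ _ ⟨β, rfl⟩ hne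
    exact hA.inter_finite_of_ne fun h => hne (congrArg A h)

lemma isLuzinFamily : IsLuzinFamily (range A) := by
  refine ⟨A, hA.injective, rfl, fun α n => (hA.finite_setOf_ncard_inter_le α n).subset ?_⟩
  rintro β ⟨hβ, hsub⟩
  exact ⟨hβ, (ncard_le_ncard hsub (finite_Iio n)).trans (ncard_Iio_nat n).le⟩

end IsLuzinWithSizesIn

open scoped symmDiff in
lemma ncard_inter_le_add_ncard_symmDiff {α : Type*} {A A' B B' : Set α} (hA : (A ∩ A').Finite)
    (hAB : (A ∆ B).Finite) (hAB' : (A' ∆ B').Finite) :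
    (B ∩ B').ncard ≤ (A ∩ A').ncard + (A ∆ B).ncard + (A' ∆ B').ncard := by
  calc (B ∩ B').ncard ≤ (A ∩ A' ∪ A ∆ B ∪ A' ∆ B').ncard := by
        refine ncard_le_ncard (fun x ⟨hB, hB'⟩ => ?_) ((hA.union hAB).union hAB')
        by_cases hxA : x ∈ A <;> by_cases hxA' : x ∈ A' <;> simp [mem_symmDiff, *]
    _ ≤ _ := (ncard_union_le _ _).trans (Nat.add_le_add_right (ncard_union_le _ _) _)

open scoped symmDiff in
lemma dist_ncard_inter_le {α : Type*} {A A' B B' : Set α} (hA : (A ∩ A').Finite)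
    (hB : (B ∩ B').Finite) (hAB : (A ∆ B).Finite) (hAB' : (A' ∆ B').Finite) :
    Nat.dist (A ∩ A').ncard (B ∩ B').ncard ≤ (A ∆ B).ncard + (A' ∆ B').ncard := by
  have h₁ := ncard_inter_le_add_ncard_symmDiff hA hAB hAB'
  have h₂ := ncard_inter_le_add_ncard_symmDiff hB (symmDiff_comm A B ▸ hAB)
    (symmDiff_comm A' B' ▸ hAB')
  rw [symmDiff_comm B, symmDiff_comm B'] at h₂
  unfold Nat.dist
  omega

lemma countable_of_forall_finite_setOf_lt {α : Type*} [LinearOrder α] {S : Set α}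
    (h : ∀ a ∈ S, {b ∈ S | b < a}.Finite) : S.Countable := by
  refine MapsTo.countable_of_injOn (f := fun a => {b ∈ S | b < a}.ncard) (mapsTo_univ _ _) ?_
    countable_univ
  intro a ha b hb hab
  by_contra hne
  wlog hlt : a < b generalizing a b
  · exact this hb ha hab.symm (Ne.symm hne) (lt_of_le_of_ne (not_lt.1 hlt) (Ne.symm hne))
  refine (ncard_lt_ncard ?_ (h b hb)).ne hab
  exact ⟨fun c hc => ⟨hc.1, hc.2.trans hlt⟩, fun hsub => lt_irrefl a (hsub ⟨ha, hlt⟩).2⟩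

lemma exists_infinite_setOf_lt_of_not_countable {α : Type*} [LinearOrder α] {S : Set α}
    (hS : ¬ S.Countable) : ∃ a ∈ S, {b ∈ S | b < a}.Infinite := by
  by_contra! h
  exact hS (countable_of_forall_finite_setOf_lt h)

lemma exists_not_countable_preimage_singleton {ι : Type*} [Uncountable ι] (f : ι → ℕ) :
    ∃ c, ¬ (f ⁻¹' {c}).Countable := by
  by_contra! h
  exact not_countable_univ ((countable_iUnion h).mono fun x _ => mem_iUnion.2 ⟨f x, rfl⟩)

section PsiSpace

attribute [-instance] instTopologicalSpaceSum
local instance (𝒞 : Set (Set ℕ)) : TopologicalSpace (ℕ ⊕ 𝒞) := psiTop 𝒞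

variable {𝒜 ℬ : Set (Set ℕ)}

lemma psi_isOpen_singleton_inl (n : ℕ) : IsOpen ({Sum.inl n} : Set (ℕ ⊕ 𝒜)) :=
  .basic _ (.inl ⟨n, rfl⟩)

lemma psi_isOpen_insert_inr (A : 𝒜) (F : Finset ℕ) :
    IsOpen (insert (Sum.inr A) (Sum.inl '' ((A : Set ℕ) \ F)) : Set (ℕ ⊕ 𝒜)) :=
  .basic _ (.inr ⟨A, F, rfl⟩)

lemma psi_exists_finset_image_inl_subset {U : Set (ℕ ⊕ 𝒜)} (hU : IsOpen U) {A : 𝒜}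
    (hA : Sum.inr A ∈ U) : ∃ F : Finset ℕ, Sum.inl '' ((A : Set ℕ) \ F) ⊆ U := by
  induction hU with
  | basic V hV =>
    rcases hV with ⟨n, rfl⟩ | ⟨A', F, rfl⟩
    · simp at hA
    · obtain rfl : A = A' := by simpa using hA
      exact ⟨F, subset_insert _ _⟩
  | univ => exact ⟨∅, subset_univ _⟩
  | inter U V _ _ ihU ihV =>
    obtain ⟨F, hF⟩ := ihU hA.1
    obtain ⟨G, hG⟩ := ihV hA.2
    refine ⟨F ∪ G, subset_inter ((image_mono ?_).trans hF) ((image_mono ?_).trans hG)⟩ <;>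
      exact sdiff_subset_sdiff_right (by simp)
  | sUnion S _ ih =>
    obtain ⟨V, hV, hAV⟩ := hA
    obtain ⟨F, hF⟩ := ih V hV hAV
    exact ⟨F, hF.trans (subset_sUnion_of_mem hV)⟩

lemma psi_not_isOpen_singleton_inr {A : 𝒜} (hA : (A : Set ℕ).Infinite) :
    ¬ IsOpen ({Sum.inr A} : Set (ℕ ⊕ 𝒜)) := fun h => by
  obtain ⟨F, hF⟩ := psi_exists_finset_image_inl_subset h rfl
  obtain ⟨x, hx⟩ := (hA.sdiff F.finite_toSet).nonempty
  simpa using hF (mem_image_of_mem _ hx)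

lemma psi_exists_homeomorph_apply_inr (h : (ℕ ⊕ 𝒜) ≃ₜ (ℕ ⊕ ℬ)) {A : 𝒜}
    (hA : (A : Set ℕ).Infinite) : ∃ B : ℬ, h (Sum.inr A) = Sum.inr B := by
  rcases hh : h (Sum.inr A) with m | B
  · refine absurd ?_ (psi_not_isOpen_singleton_inr hA)
    rw [← h.symm_apply_apply (Sum.inr A), hh, ← image_singleton]
    exact h.symm.isOpenMap _ (psi_isOpen_singleton_inl m)
  · exact ⟨B, rfl⟩

lemma psi_finite_homeomorph_image_diff (h : (ℕ ⊕ 𝒜) ≃ₜ (ℕ ⊕ ℬ)) {A : 𝒜} {B : ℬ}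
    (hAB : h (Sum.inr A) = Sum.inr B) :
    (h '' (Sum.inl '' A) \ Sum.inl '' B).Finite := by
  obtain ⟨F, hF⟩ := psi_exists_finset_image_inl_subset
    ((psi_isOpen_insert_inr B ∅).preimage h.continuous) (A := A) (by simp [hAB])
  refine ((F.finite_toSet.image Sum.inl).image h).subset ?_
  rintro _ ⟨⟨_, ⟨a, ha, rfl⟩, rfl⟩, hnot⟩
  refine ⟨Sum.inl a, ⟨a, ?_, rfl⟩, rfl⟩
  by_contra haF
  rcases hF ⟨a, ⟨ha, haF⟩, rfl⟩ with hinr | hinl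
  · exact Sum.inl_ne_inr (h.injective (hinr.trans hAB.symm))
  · exact hnot (by simpa using hinl)

open scoped symmDiff in
lemma psi_finite_symmDiff_homeomorph_image (h : (ℕ ⊕ 𝒜) ≃ₜ (ℕ ⊕ ℬ)) {A : 𝒜} {B : ℬ}
    (hAB : h (Sum.inr A) = Sum.inr B) :
    ((h '' (Sum.inl '' A)) ∆ (Sum.inl '' B)).Finite := by
  have hBA : h.symm (Sum.inr B) = Sum.inr A := by rw [← hAB, h.symm_apply_apply]
  refine (psi_finite_homeomorph_image_diff h hAB).union ?_
  refine ((psi_finite_homeomorph_image_diff h.symm hBA).image h).subset ?_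
  simp only [image_sdiff h.injective, image_image, Homeomorph.apply_symm_apply, subset_refl]

open scoped symmDiff in
theorem isEmpty_psi_homeomorph {X Y : Set ℕ} {A B : CountableOrdinal → Set ℕ}
    (hA : IsLuzinWithSizesIn X A) (hB : IsLuzinWithSizesIn Y B) (hXY : FarApart X Y) :
    IsEmpty ((ℕ ⊕ range A) ≃ₜ (ℕ ⊕ range B)) := by
  refine ⟨fun h => ?_⟩
  have hinr : ∀ α, ∃ β, h (.inr ⟨A α, mem_range_self α⟩) = .inr ⟨B β, mem_range_self β⟩ := by
    intro α
    obtain ⟨⟨_, β, rfl⟩, hβ⟩ :=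
      psi_exists_homeomorph_apply_inr h (A := ⟨A α, mem_range_self α⟩) (hA.infinite α)
    exact ⟨β, hβ⟩
  choose π hπ using hinr
  have hπ_inj : Function.Injective π := fun α α' e => hA.injective <| Subtype.ext_iff.1 <|
    Sum.inr_injective <| h.injective <| (hπ α).trans (by rw [e, hπ α'])
  let D α : Set (ℕ ⊕ range B) := h '' (.inl '' A α)
  let E α : Set (ℕ ⊕ range B) := .inl '' B (π α)
  obtain ⟨c, hc⟩ := exists_not_countable_preimage_singleton fun α => (D α ∆ E α).ncard
  obtain ⟨α, hαc, hbelow⟩ := exists_infinite_setOf_lt_of_not_countable hc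
  obtain ⟨N, hN⟩ := hXY (2 * c)
  obtain ⟨β, ⟨hβc, hβα⟩, hNβ⟩ :=
    (hbelow.sdiff (hA.finite_setOf_ncard_inter_le α N)).nonempty
  have hDD : D α ∩ D β = h '' (.inl '' (A α ∩ A β)) := by
    rw [image_inter Sum.inl_injective, image_inter h.injective]
  have hEE : E α ∩ E β = .inl '' (B (π α) ∩ B (π β)) := (image_inter Sum.inl_injective).symm
  have hπαβ : π α ≠ π β := hπ_inj.ne hβα.ne'
  have hdist := dist_ncard_inter_le
    (hDD ▸ ((hA.inter_finite hβα).image _).image _)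
    (hEE ▸ (hB.inter_finite_of_ne hπαβ).image _)
    (psi_finite_symmDiff_homeomorph_image h (hπ α))
    (psi_finite_symmDiff_homeomorph_image h (hπ β))
  rw [hDD, hEE, ncard_image_of_injective _ h.injective,
    ncard_image_of_injective _ Sum.inl_injective, ncard_image_of_injective _ Sum.inl_injective,
    show (D α ∆ E α).ncard = c from hαc, show (D β ∆ E β).ncard = c from hβc] at hdist
  have hlarge : N ≤ (A α ∩ A β).ncard := by
    by_contra hsmall
    exact hNβ ⟨hβα, by omega⟩
  exact (hN _ (hA.ncard_inter_mem hβα) hlarge _ (hB.ncard_inter_mem_of_ne hπαβ)).not_ge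
    (by omega)

end PsiSpace

/-- Theorem 13: there are 𝔠 many Luzin AD families with pairwise
non-homeomorphic Ψ-spaces. -/
theorem exists_continuum_luzin_families :
    ∃ 𝒮 : Set (Set (Set ℕ)), Cardinal.mk ↥𝒮 = Cardinal.continuum ∧
      (∀ 𝒜 ∈ 𝒮, ADFamily 𝒜 ∧ IsLuzinFamily 𝒜) ∧
      (∀ 𝒜 ∈ 𝒮, ∀ ℬ ∈ 𝒮, 𝒜 ≠ ℬ →
        ¬ Nonempty (@Homeomorph (ℕ ⊕ ↥𝒜) (ℕ ⊕ ↥ℬ) (psiTop 𝒜) (psiTop ℬ))) := by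
  have hL r := isLuzinWithSizesIn_luzinFamily (codeSet_infinite r)
  have hne {r s : Set ℕ} (hrs : r ≠ s) := (isEmpty_psi_homeomorph (hL r) (hL s)
    (farApart_codeSet hrs)).false
  have hinj : Function.Injective fun r => range (luzinFamily (codeSet r)) := by
    intro r s (e : range _ = range _)
    by_contra hrs
    refine hne hrs ?_
    rw [← e]
    exact @Homeomorph.refl _ (psiTop _)
  refine ⟨range fun r => range (luzinFamily (codeSet r)), ?_, ?_, ?_⟩
  · rw [mk_range_eq _ hinj, mk_set, mk_nat, two_power_aleph0]
  · rintro _ ⟨r, rfl⟩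
    exact ⟨(hL r).adFamily, (hL r).isLuzinFamily⟩
  · rintro _ ⟨r, rfl⟩ _ ⟨s, rfl⟩ hrs ⟨h⟩
    exact hne (by rintro rfl; exact hrs rfl) h
end

section
/- Assume 2^{ℵ₀} < 2^{ℵ₁}. Then for every almost disjoint family 𝒜 on ω of size ω₁ there exists a subfamily ℬ ⊆ 𝒜 of size ω₁ such that Ψ(𝒜) is not homeomorphic to Ψ(ℬ). -/
/-!
The points of `ω` are exactly the isolated points of `Ψ(𝒜)`, so a homeomorphism
`Ψ(𝒜) ≃ Ψ(ℬ)` restricts to a bijection `σ` of `ω` and sends each `A ∈ 𝒜` to some `B ∈ ℬ` with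
`σ[A] =* B`. If `ℬ ⊆ 𝒜`, almost disjointness makes `ℬ` recoverable from `𝒜` and `σ`: it consists
of the members of `𝒜` almost equal to the `σ`-image of a member of `𝒜`. So at most `2 ^ ℵ₀`
subfamilies have a Ψ-space homeomorphic to `Ψ(𝒜)`, whereas all but `2 ^ ℵ₀` of the `2 ^ ℵ₁`
subfamilies of `𝒜` have size `ℵ₁`.
-/

open Set Cardinal

open Filter Topology

universe u v

namespace Cardinal

theorem two_power_aleph0_lt_two_power_aleph_one_univ_iff :
    (2 : Cardinal.{u}) ^ ℵ₀ < 2 ^ ℵ₁ ↔ (2 : Cardinal.{v}) ^ ℵ₀ < 2 ^ ℵ₁ := by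
  rw [← lift_lt.{u, v}, ← lift_lt.{v, u} (a := (2 : Cardinal.{v}) ^ ℵ₀)]
  simp

theorem mk_bounded_subset_aleph0_le_continuum {α : Type u} {s : Set α} (hs : #s ≤ 𝔠) :
    #{t : Set α | t ⊆ s ∧ #t ≤ ℵ₀} ≤ 𝔠 :=
  calc #{t : Set α | t ⊆ s ∧ #t ≤ ℵ₀}
      ≤ max #s ℵ₀ ^ ℵ₀ := mk_bounded_subset_le s ℵ₀
    _ ≤ 𝔠 ^ ℵ₀ := power_le_power_right (max_le hs aleph0_le_continuum)
    _ = 𝔠 := continuum_power_aleph0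

theorem exists_subset_mk_eq_aleph_one_notMem_range
    (hc : (2 : Cardinal.{u}) ^ ℵ₀ < 2 ^ ℵ₁) {α β : Type u} {s : Set α} (hs : #s = ℵ₁)
    (hβ : #β ≤ 𝔠) (f : β → Set α) :
    ∃ t ⊆ s, #t = ℵ₁ ∧ t ∉ Set.range f := by
  by_contra! hf
  have hpow : 𝒫 s ⊆ {t | t ⊆ s ∧ #t ≤ ℵ₀} ∪ Set.range f := by
    intro t (hts : t ⊆ s)
    by_cases ht : #t ≤ ℵ₀
    · exact Or.inl ⟨hts, ht⟩
    · refine Or.inr (hf t hts (le_antisymm ?_ (aleph_one_le_iff.mpr (not_le.mp ht))))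
      exact hs ▸ mk_le_mk_of_subset hts
  refine hc.not_ge ?_
  calc (2 : Cardinal) ^ ℵ₁ = #(𝒫 s) := by rw [mk_powerset, hs]
    _ ≤ #{t : Set α | t ⊆ s ∧ #t ≤ ℵ₀} + #(Set.range f) :=
        (mk_le_mk_of_subset hpow).trans (mk_union_le _ _)
    _ ≤ 𝔠 + 𝔠 := add_le_add
        (mk_bounded_subset_aleph0_le_continuum (hs ▸ aleph_one_le_continuum))
        (mk_range_le.trans hβ)
    _ = 2 ^ ℵ₀ := by rw [add_eq_self aleph0_le_continuum, two_power_aleph0]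

end Cardinal

theorem ADFamily.eq_of_eventuallyEq {𝒜 : Set (Set ℕ)} (h𝒜 : ADFamily 𝒜) {A B : Set ℕ}
    (hA : A ∈ 𝒜) (hB : B ∈ 𝒜) (hAB : A =ᶠ[cofinite] B) : A = B := by
  by_contra hne
  have hdiff : {x | ¬(x ∈ A ↔ x ∈ B)}.Finite := eventually_cofinite.mp (eventuallyEq_set.mp hAB)
  refine h𝒜.2.1 A hA (((h𝒜.2.2 A hA B hB hne).union hdiff).subset fun x hx => ?_)
  by_cases hxB : x ∈ B
  · exact Or.inl ⟨hx, hxB⟩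
  · exact Or.inr fun h => hxB (h.mp hx)

namespace PsiSpace

def almostImageSubfamily (𝒜 : Set (Set ℕ)) (σ : ℕ → ℕ) : Set (Set ℕ) :=
  {B ∈ 𝒜 | ∃ A ∈ 𝒜, σ '' A =ᶠ[cofinite] B}

variable {𝒜 ℬ : Set (Set ℕ)}

theorem isOpen_singleton_inl (n : ℕ) : IsOpen[psiTop 𝒜] {Sum.inl n} :=
  .basic _ (Or.inl ⟨n, rfl⟩)

theorem isOpen_insert_inr_image_inl (A : 𝒜) :
    IsOpen[psiTop 𝒜] (insert (Sum.inr A) (Sum.inl '' (A : Set ℕ))) :=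
  .basic _ (Or.inr ⟨A, ∅, by simp⟩)

theorem finite_diff_preimage_inl_of_isOpen {U : Set (ℕ ⊕ 𝒜)} (hU : IsOpen[psiTop 𝒜] U)
    {A : 𝒜} (hA : Sum.inr A ∈ U) : ((A : Set ℕ) \ Sum.inl ⁻¹' U).Finite := by
  induction hU with
  | basic V hV =>
    rcases hV with ⟨n, rfl⟩ | ⟨A', F, rfl⟩
    · simp at hA
    · obtain rfl : A = A' := by simpa using hA
      refine F.finite_toSet.subset fun a ha => ?_
      by_contra haF
      exact ha.2 (Or.inr ⟨a, ⟨ha.1, haF⟩, rfl⟩)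
  | univ => simp
  | inter U V _ _ ihU ihV =>
    rw [Set.preimage_inter, Set.sdiff_inter]
    exact (ihU hA.1).union (ihV hA.2)
  | sUnion S _ ih =>
    obtain ⟨t, ht, hAt⟩ := hA
    exact (ih t ht hAt).subset
      (Set.sdiff_subset_sdiff_right (Set.preimage_mono (Set.subset_sUnion_of_mem ht)))

theorem isOpen_singleton_iff (h𝒜 : ∀ A ∈ 𝒜, A.Infinite) {x : ℕ ⊕ 𝒜} :
    IsOpen[psiTop 𝒜] {x} ↔ x.isLeft := by
  refine ⟨fun hx => ?_, fun hx => ?_⟩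
  · cases x with
    | inl n => rfl
    | inr A =>
      have hA := finite_diff_preimage_inl_of_isOpen hx rfl
      rw [← Set.image_singleton, Set.preimage_inl_image_inr, Set.sdiff_empty] at hA
      exact (h𝒜 A A.2 hA).elim
  · obtain ⟨n, rfl⟩ := Sum.isLeft_iff.mp hx
    exact isOpen_singleton_inl n

theorem finite_diff_preimage_of_continuous {f : ℕ ⊕ 𝒜 → ℕ ⊕ ℬ}
    (hf : Continuous[psiTop 𝒜, psiTop ℬ] f) {σ : ℕ → ℕ} (hσ : ∀ n, f (.inl n) = .inl (σ n))
    {A : 𝒜} {B : ℬ} (hAB : f (.inr A) = .inr B) : ((A : Set ℕ) \ σ ⁻¹' B).Finite := by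
  let := psiTop 𝒜; let := psiTop ℬ
  have hU := (isOpen_insert_inr_image_inl B).preimage hf
  refine (finite_diff_preimage_inl_of_isOpen hU (by simp [hAB])).subset
    (Set.sdiff_subset_sdiff_right fun a ha => ?_)
  simpa [hσ] using ha

section Homeomorph

variable (e : @Homeomorph (ℕ ⊕ 𝒜) (ℕ ⊕ ℬ) (psiTop 𝒜) (psiTop ℬ))

theorem isLeft_homeomorph_apply (h𝒜 : ∀ A ∈ 𝒜, A.Infinite) (hℬ : ∀ B ∈ ℬ, B.Infinite)
    (x : ℕ ⊕ 𝒜) : (e x).isLeft = x.isLeft := by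
  let := psiTop 𝒜; let := psiTop ℬ
  rw [Bool.eq_iff_iff, ← isOpen_singleton_iff h𝒜, ← isOpen_singleton_iff hℬ, ← Set.image_singleton,
    e.isOpen_image]

theorem exists_homeomorph_apply_inr (h𝒜 : ∀ A ∈ 𝒜, A.Infinite) (hℬ : ∀ B ∈ ℬ, B.Infinite)
    (A : 𝒜) : ∃ B, e (.inr A) = .inr B := by
  simpa [← Sum.isRight_iff] using isLeft_homeomorph_apply e h𝒜 hℬ (.inr A)

theorem exists_equiv_homeomorph_apply_inl (h𝒜 : ∀ A ∈ 𝒜, A.Infinite) (hℬ : ∀ B ∈ ℬ, B.Infinite) :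
    ∃ σ : ℕ ≃ ℕ, ∀ n, e (.inl n) = .inl (σ n) := by
  let := psiTop 𝒜; let := psiTop ℬ
  let σ : ℕ ≃ ℕ := Equiv.sumIsLeft.symm.trans <|
    (e.toEquiv.subtypeEquiv fun x => by simp [isLeft_homeomorph_apply e h𝒜 hℬ]).trans
      Equiv.sumIsLeft
  exact ⟨σ, fun n => by simp [σ]⟩

theorem image_eventuallyEq_of_homeomorph {σ : ℕ ≃ ℕ} (hσ : ∀ n, e (.inl n) = .inl (σ n))
    {A : 𝒜} {B : ℬ} (hAB : e (.inr A) = .inr B) : σ '' A =ᶠ[cofinite] (B : Set ℕ) := by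
  let := psiTop 𝒜; let := psiTop ℬ
  have hσsymm : ∀ n, e.symm (.inl n) = .inl (σ.symm n) := fun n => by
    rw [e.symm_apply_eq, hσ, σ.apply_symm_apply]
  have hBA : e.symm (.inr B) = .inr A := by rw [e.symm_apply_eq, hAB]
  have hAB' := finite_diff_preimage_of_continuous e.continuous hσ hAB
  have hBA' := finite_diff_preimage_of_continuous e.symm.continuous hσsymm hBA
  rw [← Equiv.image_eq_preimage_symm] at hBA'
  refine eventuallyEq_set.mpr (eventually_cofinite.mpr (((hAB'.image σ).union hBA').subset ?_))
  rw [Set.image_sdiff_preimage]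
  intro x hx
  by_cases hxB : x ∈ (B : Set ℕ)
  · exact Or.inr ⟨hxB, fun h => hx (iff_of_true h hxB)⟩
  · exact Or.inl ⟨not_not.mp fun h => hx (iff_of_false h hxB), hxB⟩

end Homeomorph

theorem exists_eq_almostImageSubfamily_of_homeomorph (h𝒜 : ADFamily 𝒜) (hℬ𝒜 : ℬ ⊆ 𝒜)
    (e : @Homeomorph (ℕ ⊕ 𝒜) (ℕ ⊕ ℬ) (psiTop 𝒜) (psiTop ℬ)) :
    ∃ σ : ℕ → ℕ, ℬ = almostImageSubfamily 𝒜 σ := by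
  let := psiTop 𝒜; let := psiTop ℬ
  have hℬ : ∀ B ∈ ℬ, B.Infinite := fun B hB => h𝒜.2.1 B (hℬ𝒜 hB)
  obtain ⟨σ, hσ⟩ := exists_equiv_homeomorph_apply_inl e h𝒜.2.1 hℬ
  refine ⟨σ, Set.ext fun B => ⟨fun hB => ?_, fun ⟨hB, A, hA, hAB⟩ => ?_⟩⟩
  · obtain ⟨A, hA⟩ := exists_homeomorph_apply_inr e.symm hℬ h𝒜.2.1 ⟨B, hB⟩
    exact ⟨hℬ𝒜 hB, A, A.2, image_eventuallyEq_of_homeomorph e hσ (e.eq_symm_apply.mp hA.symm)⟩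
  · obtain ⟨B', hB'⟩ := exists_homeomorph_apply_inr e h𝒜.2.1 hℬ ⟨A, hA⟩
    have hBB' : B = B' := h𝒜.eq_of_eventuallyEq hB (hℬ𝒜 B'.2)
      (hAB.symm.trans (image_eventuallyEq_of_homeomorph e hσ hB'))
    exact hBB' ▸ B'.2

end PsiSpace

/-- If 2^{ℵ₀} < 2^{ℵ₁}, then every AD family of size ω₁ has a subfamily of size
ω₁ whose Ψ-space is not homeomorphic to the original one. -/
theorem exists_nonhomeomorphic_subfamily
    (hc : (2 : Cardinal) ^ Cardinal.aleph0 < (2 : Cardinal) ^ Cardinal.aleph 1)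
    (𝒜 : Set (Set ℕ)) (h𝒜 : ADFamily 𝒜) (hc𝒜 : Cardinal.mk ↥𝒜 = Cardinal.aleph 1) :
    ∃ ℬ : Set (Set ℕ), ℬ ⊆ 𝒜 ∧ Cardinal.mk ↥ℬ = Cardinal.aleph 1 ∧
      ¬ Nonempty (@Homeomorph (ℕ ⊕ ↥𝒜) (ℕ ⊕ ↥ℬ) (psiTop 𝒜) (psiTop ℬ)) := by
  obtain ⟨ℬ, hℬ𝒜, hℬ, hℬσ⟩ := exists_subset_mk_eq_aleph_one_notMem_range
    (two_power_aleph0_lt_two_power_aleph_one_univ_iff.mp hc) hc𝒜 (by simp)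
    (PsiSpace.almostImageSubfamily 𝒜)
  refine ⟨ℬ, hℬ𝒜, hℬ, fun ⟨e⟩ => hℬσ ?_⟩
  obtain ⟨σ, hσ⟩ := PsiSpace.exists_eq_almostImageSubfamily_of_homeomorph h𝒜 hℬ𝒜 e
  exact ⟨σ, hσ.symm⟩
end
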